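/- Let T > 0, let M : ℝ^n → (J × n real matrices) be continuous with c > 0 such that ‖M(x) y‖ ≥ c ‖y‖ for all x, y ∈ ℝ^n, let v ∈ ℝ^n, and let ρ : [0,T] × ℝ^n → ℝ be continuous and bounded. Then ρ(T, v) = (2π)^{−n/2} √(det(M(v)ᵀ M(v))) · lim_{t → T⁻} (T−t)^{−n/2} ∫_{ℝ^n} ρ(t,q) exp(−‖M(q)(q−v)‖²/(2(T−t))) dq. -/

import Mathlib

/-!
Substituting `q = v + √(T - t) • u` turns
`(T - t)^(-n/2) ∫ ρ(t,q) exp(-‖M(q)(q - v)‖² / (2(T - t))) dq`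
into `∫ ρ(t, v + √(T - t) u) exp(-‖M(v + √(T - t) u) u‖² / 2) du`. The lower bound `c` on `M`
dominates these integrands by `C exp(-c²‖u‖²/2)`, so by dominated convergence they tend to
`ρ(T,v) ∫ exp(-uᵀ M(v)ᵀ M(v) u / 2) du = ρ(T,v) (2π)^(n/2) / √det(M(v)ᵀ M(v))`.
-/

open MeasureTheory Matrix

noncomputable def eucNorm {k : ℕ} (v : Fin k → ℝ) : ℝ :=
  ‖(EuclideanSpace.equiv (Fin k) ℝ).symm v‖

open Real

open Filter Topology Set

section EucNorm

variable {k : ℕ}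

lemma eucNorm_nonneg (w : Fin k → ℝ) : 0 ≤ eucNorm w := norm_nonneg _

lemma eucNorm_eq_zero {w : Fin k → ℝ} : eucNorm w = 0 ↔ w = 0 := by
  simp [eucNorm]

lemma eucNorm_sq (w : Fin k → ℝ) : eucNorm w ^ 2 = w ⬝ᵥ w := by
  rw [eucNorm, EuclideanSpace.norm_eq, sq_sqrt (by positivity)]
  simp [dotProduct, sq]

lemma eucNorm_smul (a : ℝ) (w : Fin k → ℝ) : eucNorm (a • w) = |a| * eucNorm w := by
  simp only [eucNorm, map_smul, norm_smul, norm_eq_abs]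

@[fun_prop]
lemma continuous_eucNorm : Continuous (eucNorm : (Fin k → ℝ) → ℝ) :=
  (EuclideanSpace.equiv (Fin k) ℝ).symm.continuous.norm

end EucNorm

section GaussianIntegral

variable {ι : Type*} [Fintype ι]

lemma exp_neg_mul_dotProduct_self_eq_prod (b : ℝ) (u : ι → ℝ) :
    exp (-b * (u ⬝ᵥ u)) = ∏ i, exp (-b * u i ^ 2) := by
  rw [← exp_sum, dotProduct, Finset.mul_sum]
  simp only [sq]

lemma integrable_exp_neg_mul_dotProduct_self {b : ℝ} (hb : 0 < b) :
    Integrable fun u : ι → ℝ => exp (-b * (u ⬝ᵥ u)) := by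
  simp_rw [exp_neg_mul_dotProduct_self_eq_prod]
  exact Integrable.fintype_prod fun _ => integrable_exp_neg_mul_sq hb

lemma integral_exp_neg_dotProduct_self_div_two :
    ∫ u : ι → ℝ, exp (-(u ⬝ᵥ u) / 2) = (2 * π) ^ (Fintype.card ι / 2 : ℝ) := by
  have h := integral_fintype_prod_volume_eq_pow (ι := ι) fun x : ℝ => exp (-(1 / 2) * x ^ 2)
  simp_rw [← exp_neg_mul_dotProduct_self_eq_prod, integral_gaussian] at h
  rw [show (fun u : ι → ℝ => exp (-(u ⬝ᵥ u) / 2)) = fun u => exp (-(1 / 2) * (u ⬝ᵥ u)) by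
    ext; ring_nf, h, sqrt_eq_rpow, ← rpow_natCast, ← rpow_mul (by positivity)]
  congr 1 <;> ring

lemma integral_comp_mulVec [DecidableEq ι] {E : Type*} [NormedAddCommGroup E] [NormedSpace ℝ E]
    {S : Matrix ι ι ℝ} (hS : S.det ≠ 0) (f : (ι → ℝ) → E) :
    ∫ u, f (S *ᵥ u) = |S.det|⁻¹ • ∫ u, f u := by
  have hS' : IsUnit (LinearMap.toMatrix (Pi.basisFun ℝ ι) (Pi.basisFun ℝ ι) (toLin' S)).det := by
    simpa [LinearMap.toMatrix_eq_toMatrix'] using hS.isUnit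
  have he : MeasurableEmbedding (toLin' S) :=
    (LinearEquiv.ofIsUnitDet hS').toContinuousLinearEquiv.toHomeomorph.measurableEmbedding
  simp_rw [← toLin'_apply, ← he.integral_map, Real.map_matrix_volume_pi_eq_smul_volume_pi hS,
    integral_smul_measure, ENNReal.toReal_ofReal (abs_nonneg _), abs_inv]

lemma integral_exp_neg_mulVec_dotProduct_div_two [DecidableEq ι] {S : Matrix ι ι ℝ}
    (hS : S.det ≠ 0) :
    ∫ u : ι → ℝ, exp (-(S *ᵥ u ⬝ᵥ S *ᵥ u) / 2) = (2 * π) ^ (Fintype.card ι / 2 : ℝ) / |S.det| := by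
  rw [integral_comp_mulVec hS (fun w => exp (-(w ⬝ᵥ w) / 2)),
    integral_exp_neg_dotProduct_self_div_two, smul_eq_mul, inv_mul_eq_div]

open scoped MatrixOrder in
lemma Matrix.PosDef.integral_exp_neg_dotProduct_mulVec_div_two [DecidableEq ι]
    {A : Matrix ι ι ℝ} (hA : A.PosDef) :
    ∫ u : ι → ℝ, exp (-(u ⬝ᵥ A *ᵥ u) / 2) = (2 * π) ^ (Fintype.card ι / 2 : ℝ) / √A.det := by
  set S := CFC.sqrt A
  have hSS : S * S = A := CFC.sqrt_mul_sqrt_self A hA.posSemidef.nonneg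
  have hSt : Sᵀ = S := (CFC.sqrt_nonneg A).posSemidef.isHermitian
  have hdet : |S.det| = √A.det := by rw [← sqrt_sq_eq_abs, sq, ← det_mul, hSS]
  have hquad (u : ι → ℝ) : u ⬝ᵥ A *ᵥ u = S *ᵥ u ⬝ᵥ S *ᵥ u := by
    rw [← hSS, ← mulVec_mulVec, dotProduct_mulVec, ← mulVec_transpose, hSt]
  have hS : S.det ≠ 0 := abs_pos.mp (hdet ▸ sqrt_pos.mpr hA.det_pos)
  simp_rw [hquad]
  rw [integral_exp_neg_mulVec_dotProduct_div_two hS, hdet]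

end GaussianIntegral

variable {n J : ℕ}

lemma injective_mulVec_of_mul_eucNorm_le {B : Matrix (Fin J) (Fin n) ℝ} {c : ℝ} (hc : 0 < c)
    (hB : ∀ y, c * eucNorm y ≤ eucNorm (B *ᵥ y)) : Function.Injective B.mulVec := by
  refine (injective_iff_map_eq_zero B.mulVecLin).mpr fun y hy => ?_
  have := hB y
  rw [← mulVecLin_apply, hy, eucNorm_eq_zero.mpr rfl] at this
  exact eucNorm_eq_zero.mp (le_antisymm (nonpos_of_mul_nonpos_right this hc) (eucNorm_nonneg y))

lemma posDef_transpose_mul_self_of_mul_eucNorm_le {B : Matrix (Fin J) (Fin n) ℝ} {c : ℝ}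
    (hc : 0 < c) (hB : ∀ y, c * eucNorm y ≤ eucNorm (B *ᵥ y)) : (Bᵀ * B).PosDef := by
  simpa using PosDef.conjTranspose_mul_self B (injective_mulVec_of_mul_eucNorm_le hc hB)

lemma integral_exp_neg_eucNorm_mulVec_sq_div_two {B : Matrix (Fin J) (Fin n) ℝ}
    (hB : (Bᵀ * B).PosDef) :
    ∫ u, exp (-eucNorm (B *ᵥ u) ^ 2 / 2) = (2 * π) ^ (n / 2 : ℝ) / √(Bᵀ * B).det := by
  have hquad (u : Fin n → ℝ) : eucNorm (B *ᵥ u) ^ 2 = u ⬝ᵥ (Bᵀ * B) *ᵥ u := by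
    rw [eucNorm_sq, ← mulVec_mulVec, dotProduct_mulVec u, vecMul_transpose]
  simp_rw [hquad]
  simpa using hB.integral_exp_neg_dotProduct_mulVec_div_two

lemma exp_neg_eucNorm_sq_div_two_le {w : Fin J → ℝ} {u : Fin n → ℝ} {c : ℝ} (hc : 0 ≤ c)
    (hw : c * eucNorm u ≤ eucNorm w) :
    exp (-eucNorm w ^ 2 / 2) ≤ exp (-(c ^ 2 / 2) * eucNorm u ^ 2) := by
  have := pow_le_pow_left₀ (mul_nonneg hc (eucNorm_nonneg u)) hw 2
  rw [exp_le_exp]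
  nlinarith

lemma rpow_neg_mul_integral_eq_integral_rescaled (M : (Fin n → ℝ) → Matrix (Fin J) (Fin n) ℝ)
    (F : (Fin n → ℝ) → ℝ) (v : Fin n → ℝ) {s : ℝ} (hs : 0 < s) :
    s ^ (-(n : ℝ) / 2) * ∫ q, F q * exp (-eucNorm (M q *ᵥ (q - v)) ^ 2 / (2 * s))
      = ∫ u, F (v + √s • u) * exp (-eucNorm (M (v + √s • u) *ᵥ u) ^ 2 / 2) := by
  set g : (Fin n → ℝ) → ℝ := fun q => F q * exp (-eucNorm (M q *ᵥ (q - v)) ^ 2 / (2 * s))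
  have hg (u : Fin n → ℝ) : g (v + √s • u)
      = F (v + √s • u) * exp (-eucNorm (M (v + √s • u) *ᵥ u) ^ 2 / 2) := by
    simp only [g, add_sub_cancel_left, mulVec_smul, eucNorm_smul, abs_of_nonneg (sqrt_nonneg s),
      mul_pow, sq_sqrt hs.le]
    field_simp
  have hpow : |(√s ^ n)⁻¹| = s ^ (-(n : ℝ) / 2) := by
    rw [abs_of_nonneg (by positivity), sqrt_eq_rpow, ← rpow_natCast, ← rpow_mul hs.le,
      ← rpow_neg hs.le]
    ring_nf
  simp_rw [← hg]
  rw [Measure.integral_comp_smul volume (fun w => g (v + w)), integral_add_left_eq_self,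
    Module.finrank_fin_fun, hpow, smul_eq_mul]

lemma tendsto_add_sqrt_sub_smul (T : ℝ) (v u : Fin n → ℝ) :
    Tendsto (fun t => v + √(T - t) • u) (𝓝 T) (𝓝 v) := by
  have : Continuous fun t : ℝ => v + √(T - t) • u := by fun_prop
  simpa using this.tendsto T

lemma tendsto_integral_rescaled {T c C : ℝ} (hT : 0 ≤ T)
    {M : (Fin n → ℝ) → Matrix (Fin J) (Fin n) ℝ} (hM : Continuous M) (hc : 0 < c)
    (hMc : ∀ x y, c * eucNorm y ≤ eucNorm (M x *ᵥ y)) (v : Fin n → ℝ)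
    {ρ : ℝ → (Fin n → ℝ) → ℝ}
    (hρcont : ContinuousOn (fun z : ℝ × (Fin n → ℝ) => ρ z.1 z.2) (Icc 0 T ×ˢ univ))
    (hρbdd : ∀ t ∈ Icc 0 T, ∀ q, |ρ t q| ≤ C) :
    Tendsto
      (fun t => ∫ u, ρ t (v + √(T - t) • u) * exp (-eucNorm (M (v + √(T - t) • u) *ᵥ u) ^ 2 / 2))
      (𝓝[Ioo 0 T] T) (𝓝 (ρ T v * ∫ u, exp (-eucNorm (M v *ᵥ u) ^ 2 / 2))) := by
  have hTmem : T ∈ Icc 0 T := ⟨hT, le_rfl⟩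
  rw [← integral_const_mul]
  refine tendsto_integral_filter_of_dominated_convergence
    (fun u => C * exp (-(c ^ 2 / 2) * eucNorm u ^ 2)) ?_ ?_ ?_ (.of_forall fun u => ?_)
  · filter_upwards [self_mem_nhdsWithin] with t ht
    have hρt : Continuous fun u => ρ t (v + √(T - t) • u) :=
      hρcont.comp_continuous (f := fun u => (t, v + √(T - t) • u)) (by fun_prop)
        fun u => ⟨Ioo_subset_Icc_self ht, trivial⟩
    exact (hρt.mul (by fun_prop)).aestronglyMeasurable
  · filter_upwards [self_mem_nhdsWithin] with t ht
    refine .of_forall fun u => ?_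
    rw [norm_mul, norm_of_nonneg (exp_pos _).le]
    exact mul_le_mul (hρbdd t (Ioo_subset_Icc_self ht) _)
      (exp_neg_eucNorm_sq_div_two_le hc.le (hMc _ u)) (exp_pos _).le
      ((abs_nonneg _).trans (hρbdd T hTmem v))
  · simp_rw [eucNorm_sq]
    exact (integrable_exp_neg_mul_dotProduct_self (by positivity)).const_mul C
  · have hpath := (tendsto_add_sqrt_sub_smul T v u).mono_left (nhdsWithin_le_nhds (s := Ioo 0 T))
    refine Tendsto.mul ?_ ?_
    · refine (hρcont (T, v) ⟨hTmem, trivial⟩).tendsto.comp (f := fun t => (t, v + √(T - t) • u))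
        (tendsto_nhdsWithin_iff.mpr ⟨?_, ?_⟩)
      · exact (tendsto_nhdsWithin_of_tendsto_nhds tendsto_id).prodMk_nhds hpath
      · filter_upwards [self_mem_nhdsWithin] with t ht using ⟨Ioo_subset_Icc_self ht, trivial⟩
    · have : Continuous fun x => exp (-eucNorm (M x *ᵥ u) ^ 2 / 2) := by fun_prop
      exact (this.tendsto v).comp hpath

/-- The density lemma: the value of a bounded continuous density `ρ` at the target point `v`
at time `T` is recovered from Gaussian-weighted integrals,
`ρ(T,v) = (2π)^{−n/2} √(det(M(v)ᵀ M(v))) lim_{t→T⁻} (T−t)^{−n/2}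
  ∫ ρ(t,q) exp(−‖M(q)(q−v)‖²/(2(T−t))) dq`. -/
theorem gaussian_density_limit (n J : ℕ) (T : ℝ) (hT : 0 < T)
    (M : (Fin n → ℝ) → Matrix (Fin J) (Fin n) ℝ) (hM : Continuous M)
    (c : ℝ) (hc : 0 < c) (hMc : ∀ x y : Fin n → ℝ, c * eucNorm y ≤ eucNorm (M x *ᵥ y))
    (v : Fin n → ℝ)
    (ρ : ℝ → (Fin n → ℝ) → ℝ)
    (hρcont : ContinuousOn (fun z : ℝ × (Fin n → ℝ) => ρ z.1 z.2)
      (Set.Icc 0 T ×ˢ Set.univ))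
    (C : ℝ) (hρbdd : ∀ t ∈ Set.Icc (0 : ℝ) T, ∀ q : Fin n → ℝ, |ρ t q| ≤ C) :
    Filter.Tendsto
      (fun t : ℝ =>
        (2 * π) ^ (-(n : ℝ) / 2) * Real.sqrt (((M v)ᵀ * M v).det)
          * ((T - t) ^ (-(n : ℝ) / 2)
            * ∫ q : Fin n → ℝ,
                ρ t q * Real.exp (-eucNorm (M q *ᵥ (q - v)) ^ 2 / (2 * (T - t)))))
      (nhdsWithin T (Set.Ioo 0 T))
      (nhds (ρ T v)) := by
  have hA : ((M v)ᵀ * M v).PosDef := posDef_transpose_mul_self_of_mul_eucNorm_le hc (hMc v)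
  have hconst : (2 * π) ^ (-(n : ℝ) / 2) * √((M v)ᵀ * M v).det
      * (ρ T v * ((2 * π) ^ (n / 2 : ℝ) / √((M v)ᵀ * M v).det)) = ρ T v := by
    have := sqrt_pos.mpr hA.det_pos
    rw [neg_div, rpow_neg (by positivity)]
    field_simp
  have hlim := (tendsto_integral_rescaled hT.le hM hc hMc v hρcont hρbdd).const_mul
    ((2 * π) ^ (-(n : ℝ) / 2) * √((M v)ᵀ * M v).det)
  rw [integral_exp_neg_eucNorm_mulVec_sq_div_two hA, hconst] at hlim
  refine hlim.congr' ?_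
  filter_upwards [self_mem_nhdsWithin] with t ht
  rw [rpow_neg_mul_integral_eq_integral_rescaled M (ρ t) v (sub_pos.mpr ht.2)]
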